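/- Let A, B, D, E ∈ ℂ satisfy Im(A·conj(D) + B·conj(E)) = 0, and define Φ : ℝ³ → ℂ³ by Φ(y₁,y₂,t) = (Φ₁, Φ₂, Φ₃) where Φ₁ = y₁² e^{it} + y₁(D e^{it/2} + E e^{−it/2}) + y₂(A e^{it/2} + B e^{−it/2}) − (1/6) A conj(B) e^{2it} + (|A|² + (1/3)|B|²) e^{it} − i(A² + conj(A)B) t − (2/3) A B e^{−it} − (1/6) B² e^{−2it}; Φ₂ = −i y₁² e^{−it} + i y₁(−conj(D) e^{−it/2} + conj(E) e^{it/2}) + i y₂(conj(A) e^{−it/2} − conj(B) e^{it/2}) + (i/6) conj(B)² e^{2it} − (2i/3) conj(A) conj(B) e^{it} + (conj(A)² − A conj(B)) t − i(|A|² + (1/3)|B|²) e^{−it} − (i/6) conj(A) B e^{−2it}; Φ₃ = y₁ y₂ + y₁(2A e^{−it/2} − 2 conj(A) e^{it/2} − (2/3) B e^{−3it/2} − (2/3) conj(B) e^{3it/2}) − ½(A conj(E) + conj(B) D) e^{it} − i Re(A conj(D) − B conj(E)) t − ½(conj(A) E + B conj(D)) e^{−it}. Then at every point of ℝ³, ω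 vanishes on each pair of partial derivatives of Φ and Im Ω(∂Φ/∂y₁, ∂Φ/∂y₂, ∂Φ/∂t) = 0; that is, N = Φ(ℝ³) is a special Lagrangian 3-fold in ℂ³ wherever it is nonsingular. -/

import Mathlib

noncomputable section

open Complex ComplexConjugate

/-- ℂ³ as triples of complex numbers. -/
abbrev C3 := ℂ × ℂ × ℂ

/-- The standard Kähler form ω(u,v) = Σ Im(conj(u_j)·v_j). -/
def omega3 (u v : C3) : ℝ :=
  (conj u.1 * v.1).im + (conj u.2.1 * v.2.1).im + (conj u.2.2 * v.2.2).im

/-- The holomorphic volume form Ω(u,v,w): determinant of the matrix with columns u,v,w. -/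
def Omega3 (u v w : C3) : ℂ :=
  u.1 * (v.2.1 * w.2.2 - v.2.2 * w.2.1)
  - v.1 * (u.2.1 * w.2.2 - u.2.2 * w.2.1)
  + w.1 * (u.2.1 * v.2.2 - u.2.2 * v.2.1)

/-- First component of Φ. -/
def Phi1 (A B D E : ℂ) (y₁ y₂ t : ℝ) : ℂ :=
  (y₁:ℂ)^2 * Complex.exp (Complex.I * t)
  + (y₁:ℂ) * (D * Complex.exp (Complex.I * t / 2) + E * Complex.exp (-(Complex.I * t / 2)))
  + (y₂:ℂ) * (A * Complex.exp (Complex.I * t / 2) + B * Complex.exp (-(Complex.I * t / 2)))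
  - (1/6 : ℂ) * A * conj B * Complex.exp (2 * Complex.I * t)
  + ((Complex.normSq A : ℂ) + (1/3 : ℂ) * (Complex.normSq B : ℂ)) * Complex.exp (Complex.I * t)
  - Complex.I * (A^2 + conj A * B) * (t:ℂ)
  - (2/3 : ℂ) * A * B * Complex.exp (-(Complex.I * t))
  - (1/6 : ℂ) * B^2 * Complex.exp (-(2 * Complex.I * t))

/-- Second component of Φ. -/
def Phi2 (A B D E : ℂ) (y₁ y₂ t : ℝ) : ℂ :=
  -Complex.I * (y₁:ℂ)^2 * Complex.exp (-(Complex.I * t))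
  + Complex.I * (y₁:ℂ) * (-conj D * Complex.exp (-(Complex.I * t / 2))
      + conj E * Complex.exp (Complex.I * t / 2))
  + Complex.I * (y₂:ℂ) * (conj A * Complex.exp (-(Complex.I * t / 2))
      - conj B * Complex.exp (Complex.I * t / 2))
  + (Complex.I / 6) * (conj B)^2 * Complex.exp (2 * Complex.I * t)
  - (2 * Complex.I / 3) * conj A * conj B * Complex.exp (Complex.I * t)
  + ((conj A)^2 - A * conj B) * (t:ℂ)
  - Complex.I * ((Complex.normSq A : ℂ) + (1/3 : ℂ) * (Complex.normSq B : ℂ))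
      * Complex.exp (-(Complex.I * t))
  - (Complex.I / 6) * conj A * B * Complex.exp (-(2 * Complex.I * t))

/-- Third component of Φ. -/
def Phi3 (A B D E : ℂ) (y₁ y₂ t : ℝ) : ℂ :=
  (y₁:ℂ) * (y₂:ℂ)
  + (y₁:ℂ) * (2 * A * Complex.exp (-(Complex.I * t / 2))
      - 2 * conj A * Complex.exp (Complex.I * t / 2)
      - (2/3 : ℂ) * B * Complex.exp (-(3 * Complex.I * t / 2))
      - (2/3 : ℂ) * conj B * Complex.exp (3 * Complex.I * t / 2))
  - (1/2 : ℂ) * (A * conj E + conj B * D) * Complex.exp (Complex.I * t)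
  - Complex.I * (((A * conj D - B * conj E).re : ℝ) : ℂ) * (t:ℂ)
  - (1/2 : ℂ) * (conj A * E + B * conj D) * Complex.exp (-(Complex.I * t))

/-- The map Φ of Theorem 8.5. -/
def Phi8 (A B D E : ℂ) (y₁ y₂ t : ℝ) : C3 :=
  (Phi1 A B D E y₁ y₂ t, Phi2 A B D E y₁ y₂ t, Phi3 A B D E y₁ y₂ t)

/-!
Put `c = exp (I * t / 2)`. Every partial derivative of `Phi8` is a Laurent polynomial in `c`
whose coefficients are polynomials in `y₁, y₂, A, B, D, E` and their conjugates, and on the unit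
circle complex conjugation acts on `c` by `c ↦ c⁻¹`. Each of the four quantities is therefore the
imaginary part of such a Laurent polynomial `P`, and the claim becomes the identity `conj P = P`,
which after clearing powers of `c` is a polynomial identity modulo `I ^ 2 = -1`. For
`ω(∂Φ/∂y₁, ∂Φ/∂y₂)` the same computation gives `2 Im(A conj D + B conj E)` instead of `0`.
-/

theorem deriv_ofReal (x : ℝ) : deriv ofReal x = 1 :=
  ofRealCLM.hasDerivAt.deriv

theorem exp_I_mul_eq_sq (x : ℂ) : exp (I * x) = exp (I * x / 2) ^ 2 := by
  rw [← exp_nat_mul]; ring_nf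

theorem exp_two_mul_I_mul_eq_pow (x : ℂ) : exp (2 * I * x) = exp (I * x / 2) ^ 4 := by
  rw [← exp_nat_mul]; ring_nf

theorem exp_three_mul_I_mul_div_two_eq_pow (x : ℂ) :
    exp (3 * I * x / 2) = exp (I * x / 2) ^ 3 := by
  rw [← exp_nat_mul]; ring_nf

theorem conj_exp_I_mul_div_two (t : ℝ) : conj (exp (I * t / 2)) = (exp (I * t / 2))⁻¹ := by
  rw [← exp_conj, ← exp_neg, map_div₀, map_mul, conj_I, conj_ofReal, map_ofNat]
  ring_nf

section Tangents

variable (A B D E : ℂ) (y₁ y₂ : ℝ) (c : ℂ)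

def tangentY₁ : C3 :=
  (2 * y₁ * c ^ 2 + D * c + E * c⁻¹,
   -2 * I * y₁ * c⁻¹ ^ 2 - I * conj D * c⁻¹ + I * conj E * c,
   y₂ + 2 * A * c⁻¹ - 2 * conj A * c - 2 / 3 * B * c⁻¹ ^ 3 - 2 / 3 * conj B * c ^ 3)

def tangentY₂ : C3 :=
  (A * c + B * c⁻¹, I * conj A * c⁻¹ - I * conj B * c, y₁)

def tangentT : C3 :=
  (I * y₁ ^ 2 * c ^ 2 + I / 2 * y₁ * (D * c - E * c⁻¹) + I / 2 * y₂ * (A * c - B * c⁻¹)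
     - I / 3 * A * conj B * c ^ 4 + I * (normSq A + normSq B / 3) * c ^ 2
     - I * (A ^ 2 + conj A * B) + 2 * I / 3 * A * B * c⁻¹ ^ 2 + I / 3 * B ^ 2 * c⁻¹ ^ 4,
   -(y₁ ^ 2 + normSq A + normSq B / 3) * c⁻¹ ^ 2 + (y₂ * conj A - y₁ * conj D) / 2 * c⁻¹
     + (y₂ * conj B - y₁ * conj E) / 2 * c - conj B ^ 2 / 3 * c ^ 4
     + 2 / 3 * conj A * conj B * c ^ 2 + (conj A ^ 2 - A * conj B) - conj A * B / 3 * c⁻¹ ^ 4,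
   -I * y₁ * (A * c⁻¹ + conj A * c) + I * y₁ * (B * c⁻¹ ^ 3 - conj B * c ^ 3)
     - I / 2 * (A * conj E + conj B * D) * c ^ 2 - I * (A * conj D - B * conj E).re
     + I / 2 * (conj A * E + B * conj D) * c⁻¹ ^ 2)

variable (t : ℝ)

theorem hasDerivAt_Phi8_y₁ :
    HasDerivAt (fun s => Phi8 A B D E s y₂ t) (tangentY₁ A B D E y₁ y₂ (exp (I * t / 2))) y₁ := by
  simp only [Phi8, Phi1, Phi2, Phi3]
  refine .prodMk ?_ (.prodMk ?_ ?_) <;>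
    refine (DifferentiableAt.hasDerivAt (by fun_prop)).congr_deriv ?_ <;>
    simp (disch := fun_prop) only [deriv_fun_add, deriv_fun_sub, deriv_fun_mul, deriv_fun_pow,
      deriv.fun_neg', deriv_const', deriv_cexp, deriv_div_const, deriv_ofReal] <;>
    simp -failIfUnchanged only [exp_neg, exp_I_mul_eq_sq, exp_two_mul_I_mul_eq_pow,
      exp_three_mul_I_mul_div_two_eq_pow] <;>
    ring

theorem hasDerivAt_Phi8_y₂ :
    HasDerivAt (fun s => Phi8 A B D E y₁ s t) (tangentY₂ A B y₁ (exp (I * t / 2))) y₂ := by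
  simp only [Phi8, Phi1, Phi2, Phi3]
  refine .prodMk ?_ (.prodMk ?_ ?_) <;>
    refine (DifferentiableAt.hasDerivAt (by fun_prop)).congr_deriv ?_ <;>
    simp (disch := fun_prop) only [deriv_fun_add, deriv_fun_sub, deriv_fun_mul, deriv_fun_pow,
      deriv.fun_neg', deriv_const', deriv_cexp, deriv_div_const, deriv_ofReal] <;>
    simp -failIfUnchanged only [exp_neg, exp_I_mul_eq_sq, exp_two_mul_I_mul_eq_pow,
      exp_three_mul_I_mul_div_two_eq_pow] <;>
    ring

theorem hasDerivAt_Phi8_t :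
    HasDerivAt (fun s => Phi8 A B D E y₁ y₂ s) (tangentT A B D E y₁ y₂ (exp (I * t / 2))) t := by
  simp only [Phi8, Phi1, Phi2, Phi3]
  refine .prodMk ?_ (.prodMk ?_ ?_) <;>
    refine (DifferentiableAt.hasDerivAt (by fun_prop)).congr_deriv ?_ <;>
    simp (disch := fun_prop) only [deriv_fun_add, deriv_fun_sub, deriv_fun_mul, deriv_fun_pow,
      deriv.fun_neg', deriv_const', deriv_cexp, deriv_div_const, deriv_ofReal] <;>
    simp only [exp_neg, exp_I_mul_eq_sq, exp_two_mul_I_mul_eq_pow,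
      exp_three_mul_I_mul_div_two_eq_pow]
  · ring
  · ring_nf
    rw [I_sq]
    ring
  · ring

end Tangents

section UnitCircle

variable {A B D E : ℂ} {y₁ y₂ : ℝ} {c : ℂ}

theorem omega3_tangentY₁_tangentY₂ (hc0 : c ≠ 0) (hc : conj c = c⁻¹) :
    omega3 (tangentY₁ A B D E y₁ y₂ c) (tangentY₂ A B y₁ c)
      = 2 * (A * conj D + B * conj E).im := by
  rw [← sub_eq_zero, show 2 * (A * conj D + B * conj E).im = (2 * (A * conj D + B * conj E)).im
    by simp]
  simp only [omega3, tangentY₁, tangentY₂, ← add_im, ← sub_im, ← conj_eq_iff_im]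
  simp only [map_add, map_sub, map_mul, map_neg, map_pow, map_div₀, map_inv₀, map_ofNat,
    conj_conj, conj_I, conj_ofReal, hc, inv_inv]
  field_simp
  grind [I_sq]

theorem omega3_tangentY₁_tangentT (hc0 : c ≠ 0) (hc : conj c = c⁻¹) :
    omega3 (tangentY₁ A B D E y₁ y₂ c) (tangentT A B D E y₁ y₂ c) = 0 := by
  simp only [omega3, tangentY₁, tangentT, ← add_im, ← conj_eq_iff_im, normSq_eq_conj_mul_self,
    re_eq_add_conj]
  simp only [map_add, map_sub, map_mul, map_neg, map_pow, map_div₀, map_inv₀, map_ofNat,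
    conj_conj, conj_I, conj_ofReal, hc, inv_inv]
  field_simp
  grind [I_sq]

theorem omega3_tangentY₂_tangentT (hc0 : c ≠ 0) (hc : conj c = c⁻¹) :
    omega3 (tangentY₂ A B y₁ c) (tangentT A B D E y₁ y₂ c) = 0 := by
  simp only [omega3, tangentY₂, tangentT, ← add_im, ← conj_eq_iff_im, normSq_eq_conj_mul_self,
    re_eq_add_conj]
  simp only [map_add, map_sub, map_mul, map_neg, map_pow, map_div₀, map_inv₀, map_ofNat,
    conj_conj, conj_I, conj_ofReal, hc, inv_inv]
  field_simp
  grind [I_sq]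

theorem im_Omega3_tangentY₁_tangentY₂_tangentT (hc0 : c ≠ 0) (hc : conj c = c⁻¹) :
    (Omega3 (tangentY₁ A B D E y₁ y₂ c) (tangentY₂ A B y₁ c) (tangentT A B D E y₁ y₂ c)).im
      = 0 := by
  simp only [Omega3, tangentY₁, tangentY₂, tangentT, ← conj_eq_iff_im, normSq_eq_conj_mul_self,
    re_eq_add_conj]
  simp only [map_add, map_sub, map_mul, map_neg, map_pow, map_div₀, map_inv₀, map_ofNat,
    conj_conj, conj_I, conj_ofReal, hc, inv_inv]
  field_simp
  grind [I_sq]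

end UnitCircle

theorem statement_8
    (A B D E : ℂ) (h : (A * conj D + B * conj E).im = 0) :
    ∀ y₁ y₂ t : ℝ,
      omega3 (deriv (fun s => Phi8 A B D E s y₂ t) y₁)
             (deriv (fun s => Phi8 A B D E y₁ s t) y₂) = 0 ∧
      omega3 (deriv (fun s => Phi8 A B D E s y₂ t) y₁)
             (deriv (fun s => Phi8 A B D E y₁ y₂ s) t) = 0 ∧
      omega3 (deriv (fun s => Phi8 A B D E y₁ s t) y₂)
             (deriv (fun s => Phi8 A B D E y₁ y₂ s) t) = 0 ∧
      (Omega3 (deriv (fun s => Phi8 A B D E s y₂ t) y₁)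
              (deriv (fun s => Phi8 A B D E y₁ s t) y₂)
              (deriv (fun s => Phi8 A B D E y₁ y₂ s) t)).im = 0 := by
  intro y₁ y₂ t
  have hc0 : exp (I * t / 2) ≠ 0 := exp_ne_zero _
  have hc := conj_exp_I_mul_div_two t
  rw [(hasDerivAt_Phi8_y₁ A B D E y₁ y₂ t).deriv, (hasDerivAt_Phi8_y₂ A B D E y₁ y₂ t).deriv,
    (hasDerivAt_Phi8_t A B D E y₁ y₂ t).deriv, omega3_tangentY₁_tangentY₂ hc0 hc, h, mul_zero]
  exact ⟨rfl, omega3_tangentY₁_tangentT hc0 hc, omega3_tangentY₂_tangentT hc0 hc,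
    im_Omega3_tangentY₁_tangentY₂_tangentT hc0 hc⟩
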